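/- Let (c̃_k)_{k∈ℤ} be an i.i.d. sequence of bounded real random variables. Then almost surely: lim_{t→+∞} sup_{s∈ℝ} (1/t)∫_s^{s+t} c(s',ω) ds' = esssup c̃, and lim_{t→+∞} inf_{s∈ℝ} (1/t)∫_s^{s+t} c(s',ω) ds' = essinf c̃, where c(t, ((ω_k)_k, y)) := (1 - t - y + l) c̃_l(ω_l) + (t + y - l) c̃_{l+1}(ω_{l+1}) for t ∈ [l, l+1), l ∈ ℤ, is the piecewise-linear interpolation of the sequence with random phase y ∈ [0,1). -/

import Mathlib

open Filter MeasureTheory ProbabilityTheory Set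

section Helpers
open intervalIntegral Topology

noncomputable def pl (g : ℤ → ℝ) (y : ℝ) (τ : ℝ) : ℝ :=
  (1 - τ - y + (⌊τ⌋ : ℝ)) * g ⌊τ⌋ + (τ + y - (⌊τ⌋ : ℝ)) * g (⌊τ⌋ + 1)



lemma pl_measurable (g : ℤ → ℝ) (y : ℝ) : Measurable (pl g y) := by
  unfold pl
  have hfl : Measurable (fun τ : ℝ => ⌊τ⌋) := Int.measurable_floor
  have h1 : Measurable (fun τ : ℝ => g ⌊τ⌋) := (measurable_from_top (f := g)).comp hfl
  have h2 : Measurable (fun τ : ℝ => g (⌊τ⌋ + 1)) :=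
    (measurable_from_top (f := fun k => g (k+1))).comp hfl
  have h3 : Measurable (fun τ : ℝ => ((⌊τ⌋ : ℝ))) :=
    (measurable_from_top (f := fun k : ℤ => (k:ℝ))).comp hfl
  fun_prop

lemma pl_abs_le {g : ℤ → ℝ} {y M : ℝ} (hb : ∀ k, |g k| ≤ M)
    (hy0 : 0 ≤ y) (hy1 : y ≤ 1) (τ : ℝ) : |pl g y τ| ≤ 3 * M := by
  have h1 : (⌊τ⌋ : ℝ) ≤ τ := Int.floor_le τ
  have h2 : τ < ⌊τ⌋ + 1 := Int.lt_floor_add_one τ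
  have := hb ⌊τ⌋
  have := hb (⌊τ⌋ + 1)
  have hM : 0 ≤ M := le_trans (abs_nonneg _) (hb 0)
  calc |pl g y τ| ≤ |(1 - τ - y + (⌊τ⌋ : ℝ))| * |g ⌊τ⌋| + |(τ + y - (⌊τ⌋ : ℝ))| * |g (⌊τ⌋ + 1)| := by
        rw [← abs_mul, ← abs_mul]; exact abs_add_le _ _
    _ ≤ 1 * M + 2 * M := by
        gcongr
        · rw [abs_le]; constructor <;> nlinarith
        · rw [abs_le]; constructor <;> nlinarith
    _ = 3 * M := by ring

lemma pl_intInt {g : ℤ → ℝ} {y M : ℝ} (hb : ∀ k, |g k| ≤ M)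
    (hy0 : 0 ≤ y) (hy1 : y ≤ 1) (a b : ℝ) : IntervalIntegrable (pl g y) volume a b := by
  rw [intervalIntegrable_iff]
  refine Integrable.mono' (g := fun _ => 3 * M) ?_ ((pl_measurable g y).aestronglyMeasurable) ?_
  · exact integrableOn_const measure_Ioc_lt_top.ne
  · exact Eventually.of_forall fun τ => by
      simpa [Real.norm_eq_abs] using pl_abs_le hb hy0 hy1 τ

lemma integral_linear (A B a b : ℝ) :
    ∫ τ in a..b, (A + B * τ) = A * (b - a) + B * ((b^2 - a^2)/2) := by
  have h1 : IntervalIntegrable (fun _ : ℝ => A) volume a b :=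
    intervalIntegrable_const
  have h2 : IntervalIntegrable (fun τ : ℝ => B * τ) volume a b := by
    apply Continuous.intervalIntegrable; fun_prop
  rw [integral_add h1 h2, intervalIntegral.integral_const, intervalIntegral.integral_const_mul, integral_id]
  simp [smul_eq_mul]; ring

lemma pl_integral_unit {g : ℤ → ℝ} {y M : ℝ} (hb : ∀ k, |g k| ≤ M)
    (hy0 : 0 ≤ y) (hy1 : y ≤ 1) (l : ℤ) :
    ∫ τ in (l:ℝ)..((l:ℝ)+1), pl g y τ = (1/2 - y) * g l + (1/2 + y) * g (l+1) := by
  have hcongr : ∫ τ in (l:ℝ)..((l:ℝ)+1), pl g y τ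
      = ∫ τ in (l:ℝ)..((l:ℝ)+1), ((1 - τ - y + (l : ℝ)) * g l + (τ + y - (l : ℝ)) * g (l+1)) := by
    apply intervalIntegral.integral_congr_ae
    have hne : ∀ᵐ τ : ℝ, τ ≠ (l:ℝ) + 1 := by
      refine (ae_iff.2 ?_)
      simpa using (Real.volume_singleton (a := (l:ℝ)+1))
    filter_upwards [hne] with τ hτ hmem
    have h1 : (l:ℝ) ≤ (l:ℝ)+1 := by linarith
    rw [uIoc_of_le h1] at hmem
    have hfl : ⌊τ⌋ = l := by
      rw [Int.floor_eq_iff]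
      exact ⟨le_of_lt hmem.1, lt_of_le_of_ne hmem.2 hτ⟩
    rw [pl, hfl]
  rw [hcongr]
  have e : (fun τ : ℝ => (1 - τ - y + (l : ℝ)) * g l + (τ + y - (l : ℝ)) * g (l+1))
      = fun τ : ℝ => ((1 - y + (l:ℝ)) * g l + (y - (l:ℝ)) * g (l+1)) + (g (l+1) - g l) * τ := by
    funext τ; ring
  rw [e, integral_linear]
  ring




lemma pl_integral_int {g : ℤ → ℝ} {y M : ℝ} (hb : ∀ k, |g k| ≤ M)
    (hy0 : 0 ≤ y) (hy1 : y ≤ 1) (p : ℤ) (n : ℕ) :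
    ∫ τ in (p:ℝ)..((p:ℝ)+n), pl g y τ
      = (∑ j ∈ Finset.range (n+1), g (p+j)) - (1/2+y) * g p - (1/2-y) * g (p+(n:ℤ)) := by
  induction n with
  | zero => simp; ring
  | succ n ih =>
      have hadj : ∫ τ in (p:ℝ)..((p:ℝ)+(n+1:ℕ)), pl g y τ
          = (∫ τ in (p:ℝ)..((p:ℝ)+n), pl g y τ)
            + ∫ τ in ((p:ℝ)+n)..((p:ℝ)+(n+1:ℕ)), pl g y τ := by
        rw [integral_add_adjacent_intervals (pl_intInt hb hy0 hy1 _ _) (pl_intInt hb hy0 hy1 _ _)]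
      have hunit : ∫ τ in ((p:ℝ)+n)..((p:ℝ)+(n+1:ℕ)), pl g y τ
          = (1/2 - y) * g (p+(n:ℤ)) + (1/2 + y) * g (p+(n:ℤ)+1) := by
        have := pl_integral_unit hb hy0 hy1 (p+(n:ℤ))
        push_cast at this ⊢
        convert this using 2 <;> ring
      rw [hadj, ih, hunit]
      rw [Finset.sum_range_succ (fun j : ℕ => g (p + (j:ℤ))) (n+1)]
      push_cast
      ring





lemma pl_edge {g : ℤ → ℝ} {y M : ℝ} (hb : ∀ k, |g k| ≤ M)
    (hy0 : 0 ≤ y) (hy1 : y ≤ 1) {a b : ℝ} :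
    |∫ τ in a..b, pl g y τ| ≤ 3 * M * |b - a| := by
  have := intervalIntegral.norm_integral_le_of_norm_le_const
    (C := 3*M) (f := pl g y) (a := a) (b := b)
    (fun x _ => by simpa [Real.norm_eq_abs] using pl_abs_le hb hy0 hy1 x)
  simpa [Real.norm_eq_abs] using this

lemma pl_window_le {g : ℤ → ℝ} {y M M0 : ℝ} (hb : ∀ k, |g k| ≤ M)
    (hy0 : 0 ≤ y) (hy1 : y ≤ 1) (hM0 : |M0| ≤ M) (hle : ∀ k, g k ≤ M0)
    (s t : ℝ) (ht : 2 ≤ t) :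
    ∫ τ in s..(s+t), pl g y τ ≤ t * M0 + (12*M+1) := by
  have hM : 0 ≤ M := le_trans (abs_nonneg _) (hb 0)
  set p := ⌈s⌉ with hp
  set q := ⌊s+t⌋ with hq
  have hps : s ≤ (p:ℝ) := Int.le_ceil s
  have hps1 : (p:ℝ) < s + 1 := Int.ceil_lt_add_one s
  have hqs : (q:ℝ) ≤ s + t := Int.floor_le _
  have hqs1 : s + t - 1 < (q:ℝ) := Int.sub_one_lt_floor _
  have hpq : p ≤ q := by
    have : (p:ℝ) ≤ (q:ℝ) := by linarith
    exact_mod_cast this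
  set n := (q - p).toNat with hndef
  have hn : (n:ℝ) = (q:ℝ) - (p:ℝ) := by
    have : ((q - p).toNat : ℤ) = q - p := Int.toNat_of_nonneg (sub_nonneg.2 hpq)
    rw [hndef]; exact_mod_cast this
  have hsplit : ∫ τ in s..(s+t), pl g y τ
      = (∫ τ in s..(p:ℝ), pl g y τ) + (∫ τ in (p:ℝ)..((p:ℝ)+(n:ℝ)), pl g y τ)
        + ∫ τ in ((p:ℝ)+(n:ℝ))..(s+t), pl g y τ := by
    rw [integral_add_adjacent_intervals (pl_intInt hb hy0 hy1 _ _) (pl_intInt hb hy0 hy1 _ _),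
      integral_add_adjacent_intervals (pl_intInt hb hy0 hy1 _ _) (pl_intInt hb hy0 hy1 _ _)]
  have hedge1 : |∫ τ in s..(p:ℝ), pl g y τ| ≤ 3*M := by
    calc |∫ τ in s..(p:ℝ), pl g y τ| ≤ 3*M*|(p:ℝ) - s| := pl_edge hb hy0 hy1
      _ ≤ 3*M*1 := by gcongr; rw [abs_le]; constructor <;> linarith
      _ = 3*M := by ring
  have hedge2 : |∫ τ in ((p:ℝ)+(n:ℝ))..(s+t), pl g y τ| ≤ 3*M := by
    calc |∫ τ in ((p:ℝ)+(n:ℝ))..(s+t), pl g y τ| ≤ 3*M*|(s+t) - ((p:ℝ)+(n:ℝ))| := pl_edge hb hy0 hy1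
      _ ≤ 3*M*1 := by gcongr; rw [abs_le, hn]; constructor <;> linarith
      _ = 3*M := by ring
  have hmid := pl_integral_int hb hy0 hy1 p n
  have hsum : ∑ j ∈ Finset.range (n+1), g (p+j) ≤ ((n:ℝ)+1) * M0 := by
    calc ∑ j ∈ Finset.range (n+1), g (p+j) ≤ ∑ _j ∈ Finset.range (n+1), M0 :=
          Finset.sum_le_sum fun j _ => hle _
      _ = ((n:ℝ)+1)*M0 := by
          rw [Finset.sum_const, Finset.card_range, nsmul_eq_mul]; push_cast; ring
  have hgp := abs_le.1 (hb p)
  have hgpn := abs_le.1 (hb (p+(n:ℤ)))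
  have hM0' := abs_le.1 hM0
  have hnt1 : (n:ℝ) + 1 ≤ t + 1 := by rw [hn]; linarith
  have hnt2 : t - 1 ≤ (n:ℝ) + 1 := by rw [hn]; linarith
  have haux : ((n:ℝ)+1) * M0 ≤ t*M0 + M := by
    rcases le_or_gt 0 M0 with h | h
    · nlinarith
    · nlinarith
  have hb1 : -((1/2+y) * g p) ≤ 2*M := by nlinarith
  have hb2 : -((1/2-y) * g (p+(n:ℤ))) ≤ 2*M := by nlinarith
  have hmidle : ∫ τ in (p:ℝ)..((p:ℝ)+(n:ℝ)), pl g y τ ≤ t*M0 + 5*M := by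
    rw [hmid]; linarith
  have he1 := (abs_le.1 hedge1).2
  have he2 := (abs_le.1 hedge2).2
  rw [hsplit]; linarith

lemma pl_window_run_ge {g : ℤ → ℝ} {y M V : ℝ} (hb : ∀ k, |g k| ≤ M)
    (hy0 : 0 ≤ y) (hy1 : y ≤ 1) (hV : |V| ≤ M+1) {m : ℕ} {a : ℤ}
    (hrun : ∀ j : ℕ, j ≤ m → V ≤ g (a + (j:ℤ)))
    (t : ℝ) (ht : 2 ≤ t) (htm : t ≤ (m:ℝ)) :
    t * V - (12*M+1) ≤ ∫ τ in (a:ℝ)..((a:ℝ)+t), pl g y τ := by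
  have hM : 0 ≤ M := le_trans (abs_nonneg _) (hb 0)
  set n := (⌊t⌋).toNat with hndef
  have hq0 : (0:ℤ) ≤ ⌊t⌋ := by
    have : (0:ℝ) ≤ t := by linarith
    exact_mod_cast Int.floor_nonneg.2 this
  have hn : (n:ℝ) = ((⌊t⌋ : ℤ) : ℝ) := by
    rw [hndef]; exact_mod_cast Int.toNat_of_nonneg hq0
  have hnt : (n:ℝ) ≤ t := by rw [hn]; exact Int.floor_le t
  have hnt1 : t - 1 < (n:ℝ) := by rw [hn]; exact Int.sub_one_lt_floor t
  have hnm : n ≤ m := by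
    have : (n:ℝ) ≤ (m:ℝ) := le_trans hnt htm
    exact_mod_cast this
  have hsplit : ∫ τ in (a:ℝ)..((a:ℝ)+t), pl g y τ
      = (∫ τ in (a:ℝ)..((a:ℝ)+(n:ℝ)), pl g y τ) + ∫ τ in ((a:ℝ)+(n:ℝ))..((a:ℝ)+t), pl g y τ := by
    rw [integral_add_adjacent_intervals (pl_intInt hb hy0 hy1 _ _) (pl_intInt hb hy0 hy1 _ _)]
  have hmid := pl_integral_int hb hy0 hy1 a n
  have hsum : ((n:ℝ)+1) * V ≤ ∑ j ∈ Finset.range (n+1), g (a+j) := by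
    calc ((n:ℝ)+1)*V = ∑ _j ∈ Finset.range (n+1), V := by
          rw [Finset.sum_const, Finset.card_range, nsmul_eq_mul]; push_cast; ring
      _ ≤ ∑ j ∈ Finset.range (n+1), g (a+j) :=
          Finset.sum_le_sum fun j hj => hrun j (by
            have := Finset.mem_range.1 hj; omega)
  have hga := abs_le.1 (hb a)
  have hgan := abs_le.1 (hb (a+(n:ℤ)))
  have hV' := abs_le.1 hV
  have haux : t*V - (M+1) ≤ ((n:ℝ)+1) * V := by
    rcases le_or_gt 0 V with h | h
    · nlinarith
    · nlinarith
  have hb1 : -(2*M) ≤ -((1/2+y) * g a) := by nlinarith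
  have hb2 : -(2*M) ≤ -((1/2-y) * g (a+(n:ℤ))) := by nlinarith
  have hmidge : t*V - (5*M+1) ≤ ∫ τ in (a:ℝ)..((a:ℝ)+(n:ℝ)), pl g y τ := by
    rw [hmid]; linarith
  have hedge : |∫ τ in ((a:ℝ)+(n:ℝ))..((a:ℝ)+t), pl g y τ| ≤ 3*M := by
    calc |∫ τ in ((a:ℝ)+(n:ℝ))..((a:ℝ)+t), pl g y τ| ≤ 3*M*|((a:ℝ)+t) - ((a:ℝ)+(n:ℝ))| :=
          pl_edge hb hy0 hy1
      _ ≤ 3*M*1 := by gcongr; rw [abs_le]; constructor <;> linarith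
      _ = 3*M := by ring
  have he := (abs_le.1 hedge).1
  rw [hsplit]; linarith

lemma det_sup {g : ℤ → ℝ} {y M M0 : ℝ} (hb : ∀ k, |g k| ≤ M) (hy0 : 0 ≤ y) (hy1 : y ≤ 1)
    (hM0 : |M0| ≤ M) (hle : ∀ k, g k ≤ M0)
    (hrun : ∀ m : ℕ, ∃ a : ℤ, ∀ j : ℕ, j ≤ m → M0 - 1/((m:ℝ)+1) ≤ g (a + (j:ℤ))) :
    Tendsto (fun t : ℝ => ⨆ s : ℝ, (∫ τ in s..(s+t), pl g y τ) / t) atTop (𝓝 M0) := by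
  have hM : 0 ≤ M := le_trans (abs_nonneg _) (hb 0)
  set C := 12*M+1 with hCdef
  have hub : ∀ t : ℝ, 2 ≤ t → ∀ s : ℝ, (∫ τ in s..(s+t), pl g y τ)/t ≤ M0 + C/t := by
    intro t ht s
    have h0 : (0:ℝ) < t := by linarith
    rw [div_le_iff₀ h0]
    calc ∫ τ in s..(s+t), pl g y τ ≤ t*M0 + C := pl_window_le hb hy0 hy1 hM0 hle s t ht
      _ = (M0 + C/t)*t := by field_simp
  have hbddA : ∀ t : ℝ, 2 ≤ t →
      BddAbove (Set.range fun s : ℝ => (∫ τ in s..(s+t), pl g y τ)/t) :=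
    fun t ht => ⟨M0 + C/t, by rintro x ⟨s, rfl⟩; exact hub t ht s⟩
  have hsup_le : ∀ t, 2 ≤ t → (⨆ s : ℝ, (∫ τ in s..(s+t), pl g y τ)/t) ≤ M0 + C/t :=
    fun t ht => ciSup_le (hub t ht)
  have hle_sup : ∀ t, 2 ≤ t →
      M0 - (C+1)/t ≤ ⨆ s : ℝ, (∫ τ in s..(s+t), pl g y τ)/t := by
    intro t ht
    have h0 : (0:ℝ) < t := by linarith
    set m := (⌈t⌉).toNat with hm
    have hmt : t ≤ (m:ℝ) := by
      have h1 : (m:ℝ) = ((⌈t⌉:ℤ):ℝ) := by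
        rw [hm]; norm_cast; exact Int.toNat_of_nonneg (Int.ceil_nonneg (by linarith))
      rw [h1]; exact Int.le_ceil t
    have hm1 : 1/((m:ℝ)+1) ≤ 1/t := by
      apply one_div_le_one_div_of_le h0; linarith
    have hm0 : (0:ℝ) ≤ (m:ℝ) := Nat.cast_nonneg m
    have hVabs : |M0 - 1/((m:ℝ)+1)| ≤ M + 1 := by
      have h01 : (0:ℝ) < (m:ℝ)+1 := by positivity
      have hp1 : (0:ℝ) ≤ 1/((m:ℝ)+1) := by positivity
      have hp2 : 1/((m:ℝ)+1) ≤ 1 := by rw [div_le_one h01]; linarith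
      have hM0' := abs_le.1 hM0
      rw [abs_le]; constructor <;> [linarith [hM0'.1]; linarith [hM0'.2]]
    obtain ⟨a, ha⟩ := hrun m
    have hwin := pl_window_run_ge hb hy0 hy1 hVabs ha t ht hmt
    have hval : M0 - (C+1)/t ≤ (∫ τ in (a:ℝ)..((a:ℝ)+t), pl g y τ)/t := by
      rw [le_div_iff₀ h0]
      have h2 : t * (1/((m:ℝ)+1)) ≤ 1 := by
        rw [mul_one_div, div_le_one (by positivity)]; linarith
      calc (M0 - (C+1)/t)*t = t*M0 - (C+1) := by field_simp
        _ ≤ t*(M0 - 1/((m:ℝ)+1)) - C := by rw [mul_sub]; linarith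
        _ ≤ ∫ τ in (a:ℝ)..((a:ℝ)+t), pl g y τ := hwin
    exact le_trans hval (le_ciSup (hbddA t ht) (a:ℝ))
  have hlow : Tendsto (fun t : ℝ => M0 - (C+1)/t) atTop (𝓝 M0) := by
    have h := Tendsto.div_atTop (tendsto_const_nhds (α := ℝ) (x := C+1)) tendsto_id
    simpa using tendsto_const_nhds.sub h
  have hhigh : Tendsto (fun t : ℝ => M0 + C/t) atTop (𝓝 M0) := by
    have h := Tendsto.div_atTop (tendsto_const_nhds (α := ℝ) (x := C)) tendsto_id
    simpa using tendsto_const_nhds.add h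
  refine tendsto_of_tendsto_of_tendsto_of_le_of_le' hlow hhigh ?_ ?_
  · filter_upwards [eventually_ge_atTop (2:ℝ)] with t ht; exact hle_sup t ht
  · filter_upwards [eventually_ge_atTop (2:ℝ)] with t ht; exact hsup_le t ht

lemma pl_neg (g : ℤ → ℝ) (y τ : ℝ) : pl (fun k => -g k) y τ = - pl g y τ := by
  unfold pl; ring

lemma real_iInf_eq_neg_iSup_neg (h : ℝ → ℝ) : (⨅ s, h s) = -⨆ s, -h s := by
  rw [iInf, iSup, Real.sInf_def]
  congr 2
  ext x
  simp only [Set.mem_neg, Set.mem_range]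
  constructor
  · rintro ⟨s, hs⟩; exact ⟨s, by linarith⟩
  · rintro ⟨s, hs⟩; exact ⟨s, by linarith⟩


variable {Ω : Type*} [MeasurableSpace Ω] {P : Measure Ω} [IsProbabilityMeasure P]

lemma my_ae_neBot : (ae P).NeBot := ae_neBot.2 (IsProbabilityMeasure.ne_zero P)

lemma abs_essSup_le {f : Ω → ℝ} {M : ℝ} (hf : ∀ ω, |f ω| ≤ M) : |essSup f P| ≤ M := by
  haveI := my_ae_neBot (P := P)
  have hub : IsBoundedUnder (· ≤ ·) (ae P) f :=
    isBoundedUnder_of ⟨M, fun ω => (abs_le.1 (hf ω)).2⟩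
  have hlb : IsBoundedUnder (· ≥ ·) (ae P) f :=
    isBoundedUnder_of ⟨-M, fun ω => (abs_le.1 (hf ω)).1⟩
  rw [abs_le]; constructor
  · exact le_limsup_of_frequently_le
      ((Eventually.of_forall fun ω => (abs_le.1 (hf ω)).1).frequently) hub
  · exact limsup_le_of_le hlb.isCoboundedUnder_le
      (Eventually.of_forall fun ω => (abs_le.1 (hf ω)).2)

lemma essSup_neg_eq {f : Ω → ℝ} {M : ℝ} (hf : ∀ ω, |f ω| ≤ M) :
    essSup (fun ω => -f ω) P = - essInf f P := by
  haveI := my_ae_neBot (P := P)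
  have hub : IsBoundedUnder (· ≤ ·) (ae P) f :=
    isBoundedUnder_of ⟨M, fun ω => (abs_le.1 (hf ω)).2⟩
  have hlb : IsBoundedUnder (· ≥ ·) (ae P) f :=
    isBoundedUnder_of ⟨-M, fun ω => (abs_le.1 (hf ω)).1⟩
  have hub' : IsBoundedUnder (· ≤ ·) (ae P) (fun ω => -f ω) :=
    isBoundedUnder_of ⟨M, fun ω => by have := (abs_le.1 (hf ω)).1; linarith⟩
  have hlb' : IsBoundedUnder (· ≥ ·) (ae P) (fun ω => -f ω) :=
    isBoundedUnder_of ⟨-M, fun ω => by have := (abs_le.1 (hf ω)).2; simp; linarith⟩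
  apply le_antisymm
  · apply limsup_le_of_le hlb'.isCoboundedUnder_le
    filter_upwards [ae_essInf_le (μ := P) (f := f) hlb] with ω hω
    simpa using hω
  · rw [neg_le]
    apply le_liminf_of_le hub.isCoboundedUnder_ge
    filter_upwards [ae_le_essSup (μ := P) (f := fun ω => -f ω) hub'] with ω hω
    linarith [hω]

lemma runs_above (X : ℤ → Ω → ℝ) (hmeas : ∀ k, Measurable (X k)) {M : ℝ}
    (hbdd : ∀ k ω, |X k ω| ≤ M)
    (hindep : iIndepFun X P)
    (hident : ∀ k, IdentDistrib (X k) (X 0) P P) :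
    ∀ᵐ ω ∂P, (∀ k, X k ω ≤ essSup (X 0) P) ∧
      ∀ m : ℕ, ∃ a : ℤ, ∀ j : ℕ, j ≤ m →
        essSup (X 0) P - 1/((m:ℝ)+1) ≤ X (a + (j:ℤ)) ω := by
  haveI := my_ae_neBot (P := P)
  set S := essSup (X 0) P with hS
  have hub : IsBoundedUnder (· ≤ ·) (ae P) (X 0) :=
    isBoundedUnder_of ⟨M, fun ω => (abs_le.1 (hbdd 0 ω)).2⟩
  have hlb : IsBoundedUnder (· ≥ ·) (ae P) (X 0) :=
    isBoundedUnder_of ⟨-M, fun ω => (abs_le.1 (hbdd 0 ω)).1⟩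
  refine Eventually.and ?_ ?_
  · rw [ae_all_iff]
    intro k
    have h0 : ∀ᵐ ω ∂P, X 0 ω ≤ S := ae_le_essSup hub
    have h0' : P (X 0 ⁻¹' (Ioi S)) = 0 := by
      rw [ae_iff] at h0
      convert h0 using 2
      ext ω; simp [not_le]
    have hk : P (X k ⁻¹' (Ioi S)) = 0 := by
      rw [(hident k).measure_mem_eq measurableSet_Ioi]; exact h0'
    rw [ae_iff]
    convert hk using 2
    ext ω; simp [not_le]
  · rw [ae_all_iff]
    intro m
    set V := S - 1/((m:ℝ)+1) with hV
    have hVS : V < S := by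
      have : (0:ℝ) < 1/((m:ℝ)+1) := by positivity
      rw [hV]; linarith
    have hp : P (X 0 ⁻¹' (Ici V)) ≠ 0 := by
      intro h
      have hae : ∀ᵐ ω ∂P, X 0 ω ≤ V := by
        have h' : ∀ᵐ ω ∂P, ¬ (V ≤ X 0 ω) := by
          rw [ae_iff]
          convert h using 2
          ext ω; simp
        filter_upwards [h'] with ω hω; exact le_of_not_ge hω
      have : S ≤ V := limsup_le_of_le hlb.isCoboundedUnder_le hae
      linarith
    set p0 := P (X 0 ⁻¹' (Ici V)) with hp0
    have hkp : ∀ k : ℤ, P (X k ⁻¹' (Ici V)) = p0 :=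
      fun k => (hident k).measure_mem_eq measurableSet_Ici
    set B : ℕ → Set Ω := fun n => ⋂ j ∈ Finset.range (m+1),
      X ((n:ℤ)*((m:ℤ)+1) + (j:ℤ)) ⁻¹' (Ici V) with hB
    have hBmeas : ∀ n, MeasurableSet (B n) := fun n =>
      MeasurableSet.biInter (Finset.range (m+1)).countable_toSet
        (fun j _ => (hmeas _) measurableSet_Ici)
    have hprod : ∀ T : Finset ℤ, P (⋂ k ∈ T, X k ⁻¹' (Ici V))
        = ∏ k ∈ T, P (X k ⁻¹' (Ici V)) := fun T =>
      hindep.measure_inter_preimage_eq_mul T (sets := fun _ => Ici V)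
        (fun i _ => measurableSet_Ici)
    set φ : ℕ → Finset ℤ := fun n =>
      (Finset.range (m+1)).image (fun j : ℕ => (n:ℤ)*((m:ℤ)+1) + (j:ℤ)) with hφ
    have hBeq : ∀ n, B n = ⋂ k ∈ φ n, X k ⁻¹' (Ici V) := by
      intro n
      rw [hφ, Finset.set_biInter_finset_image]
    have hφdisj : ∀ n n' : ℕ, n ≠ n' → Disjoint (φ n) (φ n') := by
      intro n n' hne
      rw [Finset.disjoint_left]
      rintro k hk hk'
      rw [hφ, Finset.mem_image] at hk hk'
      obtain ⟨j, hj, rfl⟩ := hk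
      obtain ⟨j', hj', he⟩ := hk'
      rw [Finset.mem_range] at hj hj'
      have hj2 : (j:ℤ) ≤ (m:ℤ) := by exact_mod_cast Nat.lt_succ_iff.1 hj
      have hj2' : (j':ℤ) ≤ (m:ℤ) := by exact_mod_cast Nat.lt_succ_iff.1 hj'
      have hj3 : (0:ℤ) ≤ (j:ℤ) := Int.natCast_nonneg j
      have hj3' : (0:ℤ) ≤ (j':ℤ) := Int.natCast_nonneg j'
      rcases lt_or_gt_of_ne hne with h | h
      · have h1 : (n:ℤ) + 1 ≤ (n':ℤ) := by exact_mod_cast h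
        nlinarith [mul_le_mul_of_nonneg_right h1 (show (0:ℤ) ≤ (m:ℤ)+1 by positivity)]
      · have h1 : (n':ℤ) + 1 ≤ (n:ℤ) := by exact_mod_cast h
        nlinarith [mul_le_mul_of_nonneg_right h1 (show (0:ℤ) ≤ (m:ℤ)+1 by positivity)]
    have hPB : ∀ n, P (B n) = p0^(m+1) := by
      intro n
      rw [hBeq, hprod]
      rw [Finset.prod_congr rfl (fun k _ => hkp k), Finset.prod_const]
      congr 1
      rw [hφ, Finset.card_image_of_injective _ (fun a b hab => by omega),
        Finset.card_range]
    have hiid : iIndepSet B P := by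
      rw [iIndepSet_iff_meas_biInter hBmeas]
      intro s
      have h1 : ⋂ n ∈ s, B n = ⋂ k ∈ s.biUnion φ, X k ⁻¹' (Ici V) := by
        rw [Finset.set_biInter_biUnion]
        exact iInter₂_congr (fun n _ => (hBeq n))
      rw [h1, hprod, Finset.prod_biUnion (fun n _ n' _ hne => hφdisj n n' hne)]
      refine Finset.prod_congr rfl (fun n _ => ?_)
      rw [hPB n, Finset.prod_congr rfl (fun k _ => hkp k), Finset.prod_const]
      congr 1
      rw [hφ, Finset.card_image_of_injective _ (fun a b hab => by omega),
        Finset.card_range]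
    have hsum : (∑' n, P (B n)) = ⊤ := by
      rw [tsum_congr hPB]
      exact ENNReal.tsum_const_eq_top_of_ne_zero (pow_ne_zero _ hp)
    have hone := ProbabilityTheory.measure_limsup_eq_one hBmeas hiid hsum
    have hms : MeasurableSet (limsup B atTop) := MeasurableSet.measurableSet_limsup hBmeas
    have hae : ∀ᵐ ω ∂P, ω ∈ limsup B atTop := by
      rw [ae_iff]
      have : {ω | ¬ ω ∈ limsup B atTop} = (limsup B atTop)ᶜ := rfl
      rw [this, measure_compl hms (measure_ne_top _ _), hone, measure_univ, tsub_self]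
    filter_upwards [hae] with ω hω
    rw [mem_limsup_iff_frequently_mem] at hω
    obtain ⟨n, hn⟩ := hω.exists
    refine ⟨(n:ℤ)*((m:ℤ)+1), fun j hj => ?_⟩
    have := Set.mem_iInter₂.1 hn j (Finset.mem_range.2 (Nat.lt_succ_of_le hj))
    exact this

end Helpers

/-- Example after Proposition `pro:ergo`: let `(c̃_k)_{k∈ℤ}` be i.i.d. bounded real
random variables, and let `c(t, (ω,y))` be the piecewise-linear interpolation of the
sequence with random phase `y ∈ [0,1)`, i.e.
`c(t,(ω,y)) = (1 - t - y + l) c̃_l(ω) + (t + y - l) c̃_{l+1}(ω)` for `t ∈ [l,l+1)`.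
Then almost surely the uniform greatest mean of `t ↦ c(t,·)` equals `esssup c̃` and
the uniform least mean equals `essinf c̃`. -/
theorem iid_interpolation_uniform_means
    {Ω : Type*} [MeasurableSpace Ω] (P : Measure Ω) [IsProbabilityMeasure P]
    (X : ℤ → Ω → ℝ)
    (hmeas : ∀ k, Measurable (X k))
    (hbdd : ∃ M : ℝ, ∀ k ω, |X k ω| ≤ M)
    (hindep : iIndepFun X P)
    (hident : ∀ k, IdentDistrib (X k) (X 0) P P)
    (c : ℝ → Ω × ℝ → ℝ)
    (hc : ∀ (t : ℝ) (ω : Ω) (y : ℝ),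
      c t (ω, y) = (1 - t - y + (⌊t⌋ : ℝ)) * X ⌊t⌋ ω + (t + y - (⌊t⌋ : ℝ)) * X (⌊t⌋ + 1) ω) :
    ∀ᵐ z ∂(P.prod (volume.restrict (Ico (0:ℝ) 1))),
      Tendsto (fun t : ℝ => ⨆ s : ℝ, (∫ τ in s..(s + t), c τ z) / t)
        atTop (nhds (essSup (X 0) P)) ∧
      Tendsto (fun t : ℝ => ⨅ s : ℝ, (∫ τ in s..(s + t), c τ z) / t)
        atTop (nhds (essInf (X 0) P)) := by
  obtain ⟨M, hM⟩ := hbdd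
  set S := essSup (X 0) P with hSdef
  set I := essInf (X 0) P with hIdef
  set X' : ℤ → Ω → ℝ := fun k ω => -(X k ω) with hX'
  have hmeas' : ∀ k, Measurable (X' k) := fun k => (hmeas k).neg
  have hM' : ∀ k ω, |X' k ω| ≤ M := fun k ω => by
    rw [hX']; simpa [abs_neg] using hM k ω
  have hindep' : iIndepFun X' P :=
    hindep.comp (fun _ => fun x : ℝ => -x) (fun _ => measurable_neg)
  have hident' : ∀ k, IdentDistrib (X' k) (X' 0) P P :=
    fun k => (hident k).comp measurable_neg
  have hSneg : essSup (X' 0) P = -I := essSup_neg_eq (fun ω => hM 0 ω)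
  have hSabs : |S| ≤ M := abs_essSup_le (fun ω => hM 0 ω)
  have hIabs : |-I| ≤ M := by rw [← hSneg]; exact abs_essSup_le (fun ω => hM' 0 ω)
  have hA := runs_above (P := P) X hmeas hM hindep hident
  rw [← hSdef] at hA
  have hB := runs_above (P := P) X' hmeas' hM' hindep' hident'
  rw [hSneg] at hB
  -- transfer to the product measure
  haveI : IsProbabilityMeasure (volume.restrict (Ico (0:ℝ) 1)) := by
    constructor
    rw [Measure.restrict_apply_univ, Real.volume_Ico]
    norm_num
  set ν := volume.restrict (Ico (0:ℝ) 1) with hν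
  have hmapfst : (P.prod ν).map Prod.fst = P := by
    rw [Measure.map_fst_prod]; simp
  have hmapsnd : (P.prod ν).map Prod.snd = ν := by
    rw [Measure.map_snd_prod]; simp
  have hΩ : ∀ᵐ z ∂(P.prod ν),
      ((∀ k, X k z.1 ≤ S) ∧ ∀ m : ℕ, ∃ a : ℤ, ∀ j : ℕ, j ≤ m →
        S - 1/((m:ℝ)+1) ≤ X (a + (j:ℤ)) z.1) ∧
      ((∀ k, X' k z.1 ≤ -I) ∧ ∀ m : ℕ, ∃ a : ℤ, ∀ j : ℕ, j ≤ m →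
        -I - 1/((m:ℝ)+1) ≤ X' (a + (j:ℤ)) z.1) := by
    have hall := hA.and hB
    rw [← hmapfst] at hall
    exact (Measure.tendsto_ae_map measurable_fst.aemeasurable).eventually hall
  have hY : ∀ᵐ z ∂(P.prod ν), z.2 ∈ Ico (0:ℝ) 1 := by
    have h : ∀ᵐ y ∂ν, y ∈ Ico (0:ℝ) 1 := by
      rw [hν]; exact ae_restrict_mem measurableSet_Ico
    rw [← hmapsnd] at h
    exact (Measure.tendsto_ae_map measurable_snd.aemeasurable).eventually h
  filter_upwards [hΩ, hY] with z hz hy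
  obtain ⟨⟨hle, hrunS⟩, ⟨hle', hrunI⟩⟩ := hz
  have hy0 : 0 ≤ z.2 := hy.1
  have hy1 : z.2 ≤ 1 := le_of_lt hy.2
  set g : ℤ → ℝ := fun k => X k z.1 with hg
  have hb : ∀ k, |g k| ≤ M := fun k => hM k z.1
  have hcz : ∀ τ, c τ z = pl g z.2 τ := fun τ => by
    rw [show z = (z.1, z.2) from rfl, hc]; rfl
  have hint_eq : ∀ s t : ℝ, (∫ τ in s..(s+t), c τ z) = ∫ τ in s..(s+t), pl g z.2 τ :=
    fun s t => intervalIntegral.integral_congr (fun τ _ => hcz τ)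
  constructor
  · have := det_sup (g := g) (y := z.2) (M := M) (M0 := S) hb hy0 hy1 hSabs hle hrunS
    convert this using 2 with t
    exact iSup_congr (fun s => by rw [hint_eq])
  · have hb' : ∀ k, |(fun k => -g k) k| ≤ M := fun k => by simpa [abs_neg] using hb k
    have hle'' : ∀ k, -g k ≤ -I := fun k => hle' k
    have hrun'' : ∀ m : ℕ, ∃ a : ℤ, ∀ j : ℕ, j ≤ m →
        -I - 1/((m:ℝ)+1) ≤ -g (a + (j:ℤ)) := hrunI
    have hdet := det_sup (g := fun k => -g k) (y := z.2) (M := M) (M0 := -I)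
      hb' hy0 hy1 hIabs hle'' hrun''
    have heq : (fun t : ℝ => ⨆ s : ℝ, (∫ τ in s..(s+t), pl (fun k => -g k) z.2 τ) / t)
        = fun t : ℝ => -⨅ s : ℝ, (∫ τ in s..(s+t), c τ z) / t := by
      funext t
      rw [real_iInf_eq_neg_iSup_neg, neg_neg]
      refine iSup_congr (fun s => ?_)
      rw [hint_eq]
      rw [show (∫ τ in s..(s+t), pl (fun k => -g k) z.2 τ)
          = ∫ τ in s..(s+t), -(pl g z.2 τ) from
        intervalIntegral.integral_congr (fun τ _ => pl_neg g z.2 τ)]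
      rw [intervalIntegral.integral_neg]
      ring
    rw [heq] at hdet
    have := hdet.neg
    simpa using this
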